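/- arXiv:2405.18705 — 4 statements merged into one kernel-verified Lean document; each statement's English description precedes it below -/
import Mathlib

section
/- Let s ∈ ℝⁿ with ‖s‖₁ > 1. Then min over x with ‖x‖₁ ≤ 1 of (‖x‖∞ - ⟨x, s⟩) is strictly negative. -/
open Finset

noncomputable def supNorm {n : ℕ} [NeZero n] (x : Fin n → ℝ) : ℝ :=
  Finset.univ.sup' Finset.univ_nonempty fun i => |x i|

/-! The point `x = sign(s) / n` works: every coordinate has modulus at most `1 / n`, so
`‖x‖₁ ≤ 1` and `‖x‖∞ ≤ 1 / n`, while `⟨x, s⟩ = ‖s‖₁ / n > 1 / n`. -/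

theorem SignType.abs_coe_le_one {α : Type*} [Ring α] [LinearOrder α] [IsStrictOrderedRing α]
    (a : SignType) : |(a : α)| ≤ 1 := by
  cases a <;> simp

theorem supNorm_le {n : ℕ} [NeZero n] {x : Fin n → ℝ} {c : ℝ} (h : ∀ i, |x i| ≤ c) :
    supNorm x ≤ c :=
  Finset.sup'_le _ _ fun i _ => h i

theorem abs_sign_div_le (r : ℝ) {c : ℝ} (hc : 0 < c) :
    |(SignType.sign r : ℝ) / c| ≤ 1 / c := by
  rw [abs_div, abs_of_pos hc]
  exact div_le_div_of_nonneg_right (SignType.abs_coe_le_one _) hc.le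

theorem sum_sign_div_mul {ι : Type*} (t : Finset ι) (s : ι → ℝ) (c : ℝ) :
    ∑ i ∈ t, (SignType.sign (s i) : ℝ) / c * s i = (∑ i ∈ t, |s i|) / c := by
  rw [Finset.sum_div]
  refine Finset.sum_congr rfl fun i _ => ?_
  rw [div_mul_eq_mul_div, sign_mul_self]

/-- If ‖s‖₁ > 1 then the minimum of ‖x‖∞ - ⟨x,s⟩ over the ℓ¹ ball is strictly negative,
i.e. some feasible point has strictly negative objective value. -/
theorem stmt1 {n : ℕ} [NeZero n] (s : Fin n → ℝ) (hs : 1 < ∑ i, |s i|) :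
    ∃ x : Fin n → ℝ, (∑ i, |x i| ≤ 1) ∧ supNorm x - ∑ i, x i * s i < 0 := by
  have hn : (0 : ℝ) < n := by exact_mod_cast NeZero.pos n
  have hx : ∀ i, |(SignType.sign (s i) : ℝ) / n| ≤ 1 / n := fun i => abs_sign_div_le _ hn
  refine ⟨fun i => (SignType.sign (s i) : ℝ) / n, ?_, ?_⟩
  · calc ∑ i, |(SignType.sign (s i) : ℝ) / n| ≤ ∑ _i : Fin n, 1 / (n : ℝ) :=
          sum_le_sum fun i _ => hx i
      _ = 1 := by simp [hn.ne']
  · calc supNorm (fun i => (SignType.sign (s i) : ℝ) / n)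
            - ∑ i, (SignType.sign (s i) : ℝ) / n * s i
        ≤ 1 / n - (∑ i, |s i|) / n := by
          rw [sum_sign_div_mul]
          gcongr
          exact supNorm_le hx
      _ < 0 := by rw [sub_neg]; gcongr
end

section
/- Consider the Dinkelbach iteration: given convex one-homogeneous f, g : ℝⁿ → ℝ with g > 0 on a compact set Ω ⊂ ℝⁿ \ {0}, define x^{k+1} ∈ argmin_{x∈Ω} (f(x) - r^k g(x)) and r^{k+1} = f(x^{k+1})/g(x^{k+1}). Then the sequence {r^k} is nonincreasing and converges to r_min = min_{x∈Ω} f(x)/g(x). -/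
/-!
The cut `y ↦ f y - r g y` vanishes at the current iterate, so the next iterate makes it
nonpositive, which is `r_{k+1} ≤ r_k`. Comparing the next iterate with an arbitrary `y ∈ Ω`
gives `r_k g(y) - f(y) ≤ (r_k - r_{k+1}) g(x_{k+1})`; as `g` is bounded on `Ω` and the
decreasing sequence `r_k` converges, the right side tends to `0`, so the limit is at most
every ratio `f(y)/g(y)`.
-/

open Filter Topology

structure IsDinkelbachSeq {α : Type*} (f g : α → ℝ) (Ω : Set α) (x : ℕ → α) (r : ℕ → ℝ) :
    Prop where
  mem : ∀ k, x k ∈ Ω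
  ratio_eq : ∀ k, r k = f (x k) / g (x k)
  isMinOn : ∀ k, IsMinOn (fun y => f y - r k * g y) Ω (x (k + 1))

namespace IsDinkelbachSeq

variable {α : Type*} {f g : α → ℝ} {Ω : Set α} {x : ℕ → α} {r : ℕ → ℝ}
  (h : IsDinkelbachSeq f g Ω x r) (hg : ∀ y ∈ Ω, 0 < g y)
include h hg

theorem apply_eq_mul (k : ℕ) : f (x k) = r k * g (x k) := by
  rw [h.ratio_eq k, div_mul_cancel₀ _ (hg _ (h.mem k)).ne']

theorem mul_sub_le {y : α} (hy : y ∈ Ω) (k : ℕ) :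
    r k * g y - f y ≤ (r k - r (k + 1)) * g (x (k + 1)) := by
  have hmin := isMinOn_iff.mp (h.isMinOn k) y hy
  rw [h.apply_eq_mul hg (k + 1)] at hmin
  linear_combination hmin

theorem antitone : Antitone r := by
  refine antitone_nat_of_succ_le fun k => ?_
  have hcut := h.mul_sub_le hg (h.mem k) k
  rw [h.apply_eq_mul hg k, sub_self] at hcut
  exact sub_nonneg.mp (nonneg_of_mul_nonneg_left hcut (hg _ (h.mem (k + 1))))

theorem tendsto_sInf (hbdd : BddBelow ((fun y => f y / g y) '' Ω)) (hM : BddAbove (g '' Ω)) :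
    Tendsto r atTop (𝓝 (sInf ((fun y => f y / g y) '' Ω))) := by
  set s := (fun y => f y / g y) '' Ω
  have hr_mem : ∀ k, r k ∈ s := fun k => ⟨x k, h.mem k, (h.ratio_eq k).symm⟩
  have hr_bdd : BddBelow (Set.range r) :=
    ⟨sInf s, Set.forall_mem_range.mpr fun k => csInf_le hbdd (hr_mem k)⟩
  have hlim : Tendsto r atTop (𝓝 (⨅ k, r k)) := tendsto_atTop_ciInf (h.antitone hg) hr_bdd
  obtain ⟨M, hM⟩ := hM
  have hlim_le : ∀ y ∈ Ω, ⨅ k, r k ≤ f y / g y := by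
    intro y hy
    have hleft : Tendsto (fun k => r k * g y - f y) atTop (𝓝 ((⨅ k, r k) * g y - f y)) :=
      (hlim.mul_const _).sub_const _
    have hright : Tendsto (fun k => (r k - r (k + 1)) * M) atTop (𝓝 0) := by
      simpa using ((hlim.sub (hlim.comp (tendsto_add_atTop_nat 1))).mul_const M)
    have hbound : ∀ k, r k * g y - f y ≤ (r k - r (k + 1)) * M := fun k =>
      (h.mul_sub_le hg hy k).trans <| mul_le_mul_of_nonneg_left
        (hM ⟨_, h.mem (k + 1), rfl⟩) (sub_nonneg.mpr (h.antitone hg k.le_succ))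
    rw [le_div_iff₀ (hg y hy)]
    linarith [le_of_tendsto_of_tendsto' hleft hright hbound]
  refine le_antisymm (le_ciInf fun k => csInf_le hbdd (hr_mem k)) ?_ ▸ hlim
  exact le_csInf ⟨_, hr_mem 0⟩ (Set.forall_mem_image.mpr hlim_le)

end IsDinkelbachSeq

theorem stmt7_general {n : ℕ} (f g : (Fin n → ℝ) → ℝ)
    (hf : ConvexOn ℝ Set.univ f) (hg : ConvexOn ℝ Set.univ g)
    (Ω : Set (Fin n → ℝ)) (hΩc : IsCompact Ω)
    (hgpos : ∀ x ∈ Ω, 0 < g x)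
    (x : ℕ → Fin n → ℝ) (r : ℕ → ℝ)
    (hx0 : x 0 ∈ Ω) (hr0 : r 0 = f (x 0) / g (x 0))
    (hstep : ∀ k, x (k + 1) ∈ Ω ∧
      ∀ y ∈ Ω, f (x (k + 1)) - r k * g (x (k + 1)) ≤ f y - r k * g y)
    (hrk : ∀ k, r (k + 1) = f (x (k + 1)) / g (x (k + 1))) :
    Antitone r ∧
    Tendsto r atTop (nhds (sInf ((fun z => f z / g z) '' Ω))) := by
  have hfc : ContinuousOn f Ω := (hf.continuousOn isOpen_univ).mono (Set.subset_univ Ω)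
  have hgc : ContinuousOn g Ω := (hg.continuousOn isOpen_univ).mono (Set.subset_univ Ω)
  have hseq : IsDinkelbachSeq f g Ω x r :=
    { mem := fun k => k.casesOn hx0 fun k => (hstep k).1
      ratio_eq := fun k => k.casesOn hr0 hrk
      isMinOn := fun k => isMinOn_iff.mpr (hstep k).2 }
  exact ⟨hseq.antitone hgpos, hseq.tendsto_sInf hgpos
    (hΩc.bddBelow_image (hfc.div hgc fun y hy => (hgpos y hy).ne'))
    (hΩc.bddAbove_image hgc)⟩

theorem stmt7 {n : ℕ} (f g : (Fin n → ℝ) → ℝ)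
    (hf : ConvexOn ℝ Set.univ f) (hg : ConvexOn ℝ Set.univ g)
    (hfh : ∀ t : ℝ, 0 ≤ t → ∀ x : Fin n → ℝ, f (t • x) = t * f x)
    (hgh : ∀ t : ℝ, 0 ≤ t → ∀ x : Fin n → ℝ, g (t • x) = t * g x)
    (Ω : Set (Fin n → ℝ)) (hΩc : IsCompact Ω) (hΩne : Ω.Nonempty)
    (hΩ0 : (0 : Fin n → ℝ) ∉ Ω)
    (hgpos : ∀ x ∈ Ω, 0 < g x)
    (x : ℕ → Fin n → ℝ) (r : ℕ → ℝ)
    (hx0 : x 0 ∈ Ω) (hr0 : r 0 = f (x 0) / g (x 0))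
    (hstep : ∀ k, x (k + 1) ∈ Ω ∧
      ∀ y ∈ Ω, f (x (k + 1)) - r k * g (x (k + 1)) ≤ f y - r k * g y)
    (hrk : ∀ k, r (k + 1) = f (x (k + 1)) / g (x (k + 1))) :
    Antitone r ∧
    Tendsto r atTop (nhds (sInf ((fun z => f z / g z) '' Ω))) :=
  stmt7_general f g hf hg Ω hΩc hgpos x r hx0 hr0 hstep hrk
end

section
/- Let s ∈ ℝⁿ with coordinates sorted so that |s_1| ≥ … ≥ |s_n|, and for 1 ≤ m ≤ n let x^{(m)} = (1/m)(sign(s_1),…,sign(s_m),0,…,0). Then min over x with ‖x‖₁ ≤ 1 of (‖x‖∞ - ⟨x, s⟩) equals min(0, min_{1≤m≤n} (1 - Σ_{i=1}^m |s_i|)/m). -/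
open Finset

/-! Write `R` for the right-hand side. The vectors `0` and `x⁽ᵐ⁾` attain the values `0` and
`(1 - ∑_{i ≤ m} |sᵢ|) / m`. Conversely, the indices with `|sᵢ| + R ≥ 0` form an initial segment
`{1, …, m}`, and `R ≤ (1 - ∑_{i ≤ m} |sᵢ|) / m` gives `∑ᵢ max(|sᵢ| + R, 0) ≤ 1`. Since `R ≤ 0`,
every `x` with `‖x‖₁ ≤ 1` then satisfies
`⟨x, s⟩ ≤ ∑ᵢ |xᵢ| (|sᵢ| + R) - R ≤ ‖x‖∞ ∑ᵢ max(|sᵢ| + R, 0) - R ≤ ‖x‖∞ - R`. -/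

namespace Fin

variable {n : ℕ}

lemma val_lt_card_iff_mem_of_isLowerSet {T : Finset (Fin n)}
    (hT : IsLowerSet (T : Set (Fin n))) (i : Fin n) : (i : ℕ) < #T ↔ i ∈ T := by
  constructor
  · intro hlt
    by_contra hi
    have hsub : T ⊆ Iio i := fun j hj => mem_Iio.2 <| lt_of_not_ge fun hij => hi (hT hij hj)
    have := card_le_card hsub
    rw [Fin.card_Iio] at this
    omega
  · intro hi
    have hsub : Iic i ⊆ T := fun j hj => hT (mem_Iic.1 hj) hi
    have := card_le_card hsub
    rw [Fin.card_Iic] at this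
    omega

lemma exists_sum_max_zero_eq_sum_prefix_of_antitone {a : Fin n → ℝ} (ha : Antitone a) :
    ∃ m ≤ n, ∑ i, max (a i) 0 = ∑ i ∈ univ.filter (fun i : Fin n => (i : ℕ) < m), a i := by
  classical
  set T : Finset (Fin n) := {i | 0 ≤ a i}
  have hT : IsLowerSet (T : Set (Fin n)) := fun i j hji hi => by
    simp only [coe_filter, mem_univ, true_and, Set.mem_ofPred_eq, T] at hi ⊢
    exact hi.trans (ha hji)
  refine ⟨#T, card_le_univ T |>.trans_eq (Fintype.card_fin n), ?_⟩
  rw [sum_filter]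
  refine sum_congr rfl fun i _ => ?_
  simp only [Fin.val_lt_card_iff_mem_of_isLowerSet hT, T, mem_filter, mem_univ, true_and]
  split_ifs with hi
  · exact max_eq_left hi
  · exact max_eq_right (lt_of_not_ge hi).le

end Fin

lemma sum_max_abs_add_le_one {n : ℕ} {s : Fin n → ℝ} (hs : Antitone fun i => |s i|) {R : ℝ}
    (hR : ∀ m ∈ Icc 1 n,
      R ≤ (1 - ∑ i ∈ univ.filter (fun i : Fin n => (i : ℕ) < m), |s i|) / m) :
    ∑ i, max (|s i| + R) 0 ≤ 1 := by
  obtain ⟨m, hmn, hsum⟩ :=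
    Fin.exists_sum_max_zero_eq_sum_prefix_of_antitone (a := fun i => |s i| + R)
      fun i j hij => add_le_add_left (hs hij) R
  rw [hsum]
  rcases Nat.eq_zero_or_pos m with rfl | hm
  · simp
  · have hRm := hR m (mem_Icc.2 ⟨hm, hmn⟩)
    rw [le_div_iff₀ (by positivity)] at hRm
    rw [sum_add_distrib, sum_const, Fin.card_filter_val_lt, min_eq_right hmn, nsmul_eq_mul]
    linarith

section supNorm

variable {n : ℕ} [NeZero n]

lemma abs_le_supNorm (x : Fin n → ℝ) (i : Fin n) : |x i| ≤ supNorm x :=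
  le_sup' (fun i => |x i|) (mem_univ i)

lemma supNorm_nonneg (x : Fin n → ℝ) : 0 ≤ supNorm x :=
  (abs_nonneg _).trans (abs_le_supNorm x 0)

lemma le_supNorm_sub_sum_mul {s x : Fin n → ℝ} {R : ℝ} (hR0 : R ≤ 0)
    (hR : ∑ i, max (|s i| + R) 0 ≤ 1) (hx : ∑ i, |x i| ≤ 1) :
    R ≤ supNorm x - ∑ i, x i * s i := by
  have hpos : ∀ i, |x i| * (|s i| + R) ≤ supNorm x * max (|s i| + R) 0 := fun i =>
    (mul_le_mul_of_nonneg_left (le_max_left _ _) (abs_nonneg _)).trans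
      (mul_le_mul_of_nonneg_right (abs_le_supNorm x i) (le_max_right _ _))
  suffices ∑ i, x i * s i ≤ supNorm x - R by linarith
  calc ∑ i, x i * s i
      ≤ ∑ i, |x i| * |s i| := sum_le_sum fun i _ => (le_abs_self _).trans_eq (abs_mul _ _)
    _ = ∑ i, |x i| * (|s i| + R) - R * ∑ i, |x i| := by
        rw [mul_sum, ← sum_sub_distrib]
        exact sum_congr rfl fun i _ => by ring
    _ ≤ supNorm x * ∑ i, max (|s i| + R) 0 - R := by
        gcongr ?_ - ?_
        · exact (sum_le_sum fun i _ => hpos i).trans_eq (mul_sum _ _ _).symm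
        · nlinarith [mul_nonneg (sub_nonneg.2 hx) (neg_nonneg.2 hR0)]
    _ ≤ supNorm x - R := by
        gcongr
        exact mul_le_of_le_one_right (supNorm_nonneg x) hR

end supNorm

noncomputable def sgn (t : ℝ) : ℝ := if 0 ≤ t then 1 else -1

lemma abs_sgn (t : ℝ) : |sgn t| = 1 := by
  unfold sgn; split_ifs <;> simp

lemma sgn_mul_self (t : ℝ) : sgn t * t = |t| := by
  unfold sgn
  split_ifs with ht
  · rw [one_mul, abs_of_nonneg ht]
  · rw [neg_one_mul, abs_of_neg (lt_of_not_ge ht)]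

section signPrefix

variable {n : ℕ}

/-- The vector `x⁽ᵐ⁾ = (sign s₁, …, sign sₘ, 0, …, 0) / m` of the paper. -/
noncomputable def signPrefix (s : Fin n → ℝ) (m : ℕ) : Fin n → ℝ :=
  fun i => if (i : ℕ) < m then sgn (s i) / m else 0

lemma abs_signPrefix (s : Fin n → ℝ) (m : ℕ) (i : Fin n) :
    |signPrefix s m i| = if (i : ℕ) < m then (m : ℝ)⁻¹ else 0 := by
  unfold signPrefix
  split_ifs
  · rw [abs_div, abs_sgn, Nat.abs_cast, one_div]
  · exact abs_zero

lemma sum_abs_signPrefix (s : Fin n → ℝ) {m : ℕ} (hm : m ∈ Icc 1 n) :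
    ∑ i, |signPrefix s m i| = 1 := by
  obtain ⟨hm1, hmn⟩ := mem_Icc.1 hm
  simp only [abs_signPrefix]
  rw [← sum_filter, sum_const, Fin.card_filter_val_lt, min_eq_right hmn, nsmul_eq_mul,
    mul_inv_cancel₀ (Nat.cast_ne_zero.2 (Nat.one_le_iff_ne_zero.1 hm1))]

lemma sum_signPrefix_mul (s : Fin n → ℝ) (m : ℕ) :
    ∑ i, signPrefix s m i * s i =
      (∑ i ∈ univ.filter (fun i : Fin n => (i : ℕ) < m), |s i|) / m := by
  rw [sum_filter, sum_div]
  refine sum_congr rfl fun i _ => ?_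
  unfold signPrefix
  split_ifs
  · rw [div_mul_eq_mul_div, sgn_mul_self]
  · rw [zero_mul, zero_div]

lemma supNorm_signPrefix [NeZero n] (s : Fin n → ℝ) {m : ℕ} (hm : 0 < m) :
    supNorm (signPrefix s m) = (m : ℝ)⁻¹ := by
  refine le_antisymm (sup'_le _ _ fun i _ => ?_) ?_
  · rw [abs_signPrefix]
    split_ifs
    · exact le_rfl
    · positivity
  · calc (m : ℝ)⁻¹ = |signPrefix s m 0| := by rw [abs_signPrefix, if_pos (by simpa using hm)]
      _ ≤ supNorm (signPrefix s m) := abs_le_supNorm _ 0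

end signPrefix

/-- Closed-form value of the inner subproblem: for `s` sorted by decreasing absolute value,
`min_{‖x‖₁ ≤ 1} (‖x‖∞ - ⟨x,s⟩) = min(0, min_{1 ≤ m ≤ n} (1 - ∑_{i=1}^m |s_i|)/m)`. -/
theorem stmt11 {n : ℕ} [NeZero n] (s : Fin n → ℝ)
    (hsort : ∀ i j : Fin n, i ≤ j → |s j| ≤ |s i|) :
    sInf {v : ℝ | ∃ x : Fin n → ℝ, (∑ i, |x i| ≤ 1) ∧ v = supNorm x - ∑ i, x i * s i}
      = min 0 ((Finset.Icc 1 n).inf'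
          (Finset.nonempty_Icc.mpr (Nat.one_le_iff_ne_zero.mpr (NeZero.ne n)))
          (fun m => (1 - ∑ i ∈ Finset.univ.filter (fun i : Fin n => (i : ℕ) < m), |s i|) / m)) := by
  set c : ℕ → ℝ := fun m => (1 - ∑ i ∈ univ.filter (fun i : Fin n => (i : ℕ) < m), |s i|) / m
  have hne : (Icc 1 n).Nonempty := nonempty_Icc.2 (Nat.one_le_iff_ne_zero.2 (NeZero.ne n))
  have hR : ∀ m ∈ Icc 1 n, min 0 ((Icc 1 n).inf' hne c) ≤ c m := fun m hm =>
    (min_le_right _ _).trans (inf'_le c hm)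
  refine IsLeast.csInf_eq ⟨?_, ?_⟩
  · rcases min_choice 0 ((Icc 1 n).inf' hne c) with h | h <;> rw [h]
    · exact ⟨0, by simp, by simp [supNorm]⟩
    · obtain ⟨m, hm, hcm⟩ := exists_mem_eq_inf' hne c
      refine ⟨signPrefix s m, (sum_abs_signPrefix s hm).le, ?_⟩
      rw [hcm, supNorm_signPrefix s (mem_Icc.1 hm).1, sum_signPrefix_mul, ← one_div, ← sub_div]
  · rintro v ⟨x, hx, rfl⟩
    exact le_supNorm_sub_sum_mul (min_le_left _ _) (sum_max_abs_add_le_one hsort hR) hx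
end

section
/- Let μ_i > 0 and α be a weighted median of x (i.e., α ∈ argmin_c Σ_i μ_i|x_i - c|). Then v ∈ ℝⁿ is a subgradient of N(x) = min_c Σ_i μ_i|x_i - c| at x if and only if v_i = μ_i·sign(x_i - α) for all i with x_i ≠ α, v_i ∈ [-μ_i, μ_i] for all i with x_i = α, and Σ_i v_i = 0 when x is such that the weighted median set has nonempty interior; in particular any subgradient v satisfies Σ_{x_i<α} μ_i - Σ_{x_i>α} μ_i - Σ_{x_i=α} μ_i ≤ Σ_{i: x_i=α} v_i ≤ Σ_{x_i<α} μ_i - Σ_{x_i>α} μ_i + Σ_{x_i=α} μ_i. -/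
/-!
At a weighted median `α` one has `N(x) = ∑ μᵢ |xᵢ - α|`, and `N` is invariant under adding a
constant to every coordinate. Moving a single coordinate `xⱼ` to `α + b` changes the upper bound
`∑ μᵢ |xᵢ - α|` only in its `j`-th term, so every subgradient `v` of `N` has `vⱼ` in the
subdifferential of `b ↦ μⱼ |b|` at `xⱼ - α`; translation invariance forces `∑ vᵢ = 0`.
Conversely these conditions give, for every `y` and `c`,
`N(x) + ⟪y - x, v⟫ = ∑ μᵢ |xᵢ - α| + ∑ ((yᵢ - c) - (xᵢ - α)) vᵢ ≤ ∑ μᵢ |yᵢ - c|`,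
and taking the infimum over `c` gives the subgradient inequality. Summing the coordinate
conditions against `∑ vᵢ = 0` gives exactly `∑_{xᵢ = α} vᵢ = ∑_{xᵢ < α} μᵢ - ∑_{xᵢ > α} μᵢ`.
-/

open Finset

/-- `N(x) = min_{c ∈ ℝ} ∑ᵢ μᵢ |xᵢ - c|`. -/
noncomputable def Nfun {n : ℕ} (μ : Fin n → ℝ) (x : Fin n → ℝ) : ℝ :=
  ⨅ c : ℝ, ∑ i, μ i * |x i - c|

/-- `v` is a subgradient of `f` at `x`. -/
def SubgradientAt {n : ℕ} (f : (Fin n → ℝ) → ℝ) (x v : Fin n → ℝ) : Prop :=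
  ∀ y : Fin n → ℝ, f x + ∑ i, (y i - x i) * v i ≤ f y

theorem abs_subgradient_iff {m a w : ℝ} (hm : 0 ≤ m) :
    (∀ b, m * |a| + (b - a) * w ≤ m * |b|) ↔
      (0 < a → w = m) ∧ (a < 0 → w = -m) ∧ (a = 0 → |w| ≤ m) := by
  constructor
  · intro h
    refine ⟨fun ha => ?_, fun ha => ?_, fun ha => ?_⟩
    · have h₀ := h 0
      have h₂ := h (2 * a)
      simp only [abs_zero, mul_zero, abs_mul, abs_two, abs_of_pos ha] at h₀ h₂
      nlinarith
    · have h₀ := h 0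
      have h₂ := h (2 * a)
      simp only [abs_zero, mul_zero, abs_mul, abs_two, abs_of_neg ha] at h₀ h₂
      nlinarith
    · subst ha
      have h₁ := h 1
      have h₃ := h (-1)
      simp only [abs_zero, abs_one, abs_neg, mul_zero, sub_zero, zero_add, mul_one,
        one_mul] at h₁ h₃
      exact abs_le.mpr ⟨by linarith, h₁⟩
  · rintro ⟨hpos, hneg, hzero⟩ b
    rcases lt_trichotomy a 0 with ha | rfl | ha
    · rw [hneg ha, abs_of_neg ha]
      nlinarith [neg_abs_le b]
    · calc m * |0| + (b - 0) * w = b * w := by simp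
        _ ≤ |b| * |w| := (le_abs_self _).trans_eq (abs_mul b w)
        _ ≤ m * |b| := by nlinarith [abs_nonneg b, hzero rfl]
    · rw [hpos ha, abs_of_pos ha]
      nlinarith [le_abs_self b]

variable {n : ℕ}

theorem SubgradientAt.le_update {f : (Fin n → ℝ) → ℝ} {x v : Fin n → ℝ}
    (h : SubgradientAt f x v) (j : Fin n) (s : ℝ) :
    f x + (s - x j) * v j ≤ f (Function.update x j s) := by
  simpa [Function.update_apply, ite_sub] using h (Function.update x j s)

theorem sum_mul_abs_update_sub (μ x : Fin n → ℝ) (j : Fin n) (α b : ℝ) :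
    ∑ i, μ i * |Function.update x j (α + b) i - α|
      = ∑ i, μ i * |x i - α| - μ j * |x j - α| + μ j * |b| := by
  rw [← add_sum_erase _ _ (mem_univ j), ← add_sum_erase _ _ (mem_univ j),
    sum_congr rfl fun i hi => by rw [Function.update_of_ne (ne_of_mem_erase hi)]]
  simp only [Function.update_self, add_sub_cancel_left]
  ring

namespace Nfun

variable {μ : Fin n → ℝ}

theorem le_sum (hμ : ∀ i, 0 ≤ μ i) (x : Fin n → ℝ) (c : ℝ) :
    Nfun μ x ≤ ∑ i, μ i * |x i - c| := by
  refine ciInf_le ⟨0, ?_⟩ c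
  rintro _ ⟨d, rfl⟩
  exact sum_nonneg fun i _ => mul_nonneg (hμ i) (abs_nonneg _)

theorem eq_sum_of_isMin (hμ : ∀ i, 0 ≤ μ i) {x : Fin n → ℝ} {α : ℝ}
    (hα : ∀ c, ∑ i, μ i * |x i - α| ≤ ∑ i, μ i * |x i - c|) :
    Nfun μ x = ∑ i, μ i * |x i - α| :=
  le_antisymm (le_sum hμ x α) (le_ciInf hα)

theorem add_const_le (hμ : ∀ i, 0 ≤ μ i) (x : Fin n → ℝ) (t : ℝ) :
    Nfun μ (fun i => x i + t) ≤ Nfun μ x :=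
  le_ciInf fun c => (le_sum hμ _ (c + t)).trans_eq <| by simp only [add_sub_add_right_eq_sub]

theorem sum_eq_zero_of_subgradientAt (hμ : ∀ i, 0 ≤ μ i) {x v : Fin n → ℝ}
    (hv : SubgradientAt (Nfun μ) x v) : ∑ i, v i = 0 := by
  have shift (t : ℝ) : t * ∑ i, v i ≤ 0 := by
    have := (hv fun i => x i + t).trans (add_const_le hμ x t)
    simp only [add_sub_cancel_left, ← mul_sum] at this
    linarith
  linarith [shift 1, shift (-1)]

variable {x : Fin n → ℝ} {α : ℝ}

theorem abs_subgradient_of_subgradientAt (hμ : ∀ i, 0 ≤ μ i)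
    (hα : ∀ c, ∑ i, μ i * |x i - α| ≤ ∑ i, μ i * |x i - c|) {v : Fin n → ℝ}
    (hv : SubgradientAt (Nfun μ) x v) (j : Fin n) (b : ℝ) :
    μ j * |x j - α| + (b - (x j - α)) * v j ≤ μ j * |b| := by
  have hupd := (hv.le_update j (α + b)).trans (le_sum hμ _ α)
  rw [sum_mul_abs_update_sub, eq_sum_of_isMin hμ hα] at hupd
  linarith

theorem subgradientAt_of_abs_subgradient (hμ : ∀ i, 0 ≤ μ i)
    (hα : ∀ c, ∑ i, μ i * |x i - α| ≤ ∑ i, μ i * |x i - c|) {v : Fin n → ℝ}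
    (hcoord : ∀ i b, μ i * |x i - α| + (b - (x i - α)) * v i ≤ μ i * |b|)
    (hsum : ∑ i, v i = 0) : SubgradientAt (Nfun μ) x v := by
  intro y
  rw [eq_sum_of_isMin hμ hα]
  refine le_ciInf fun c => ?_
  have hshift : ∑ i, (y i - x i) * v i = ∑ i, ((y i - c) - (x i - α)) * v i := by
    have : ∑ i, ((y i - c) - (x i - α)) * v i
        = ∑ i, (y i - x i) * v i + (α - c) * ∑ i, v i := by
      rw [mul_sum, ← sum_add_distrib]
      exact sum_congr rfl fun i _ => by ring
    rw [this, hsum, mul_zero, add_zero]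
  rw [hshift, ← sum_add_distrib]
  exact sum_le_sum fun i _ => hcoord i (y i - c)

end Nfun

theorem sum_filter_eq_sub_of_sum_eq_zero {μ x v : Fin n → ℝ} {α : ℝ}
    (hgt : ∀ i, α < x i → v i = μ i) (hlt : ∀ i, x i < α → v i = -μ i)
    (hsum : ∑ i, v i = 0) :
    ∑ i ∈ univ.filter (fun i => x i = α), v i
      = ∑ i ∈ univ.filter (fun i => x i < α), μ i
        - ∑ i ∈ univ.filter (fun i => α < x i), μ i := by
  have hsplit (i : Fin n) : v i = (if x i = α then v i else 0)
      - (if x i < α then μ i else 0) + (if α < x i then μ i else 0) := by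
    rcases lt_trichotomy (x i) α with h | h | h
    · simp [hlt i h, h, h.ne, h.not_gt]
    · simp [h]
    · simp [hgt i h, h, h.ne', h.not_gt]
  rw [sum_congr rfl fun i _ => hsplit i, sum_add_distrib, sum_sub_distrib] at hsum
  simp only [sum_filter]
  linarith

theorem stmt14_general {n : ℕ} (μ : Fin n → ℝ) (hμ : ∀ i, 0 < μ i)
    (x : Fin n → ℝ) (α : ℝ)
    (hα : ∀ c : ℝ, ∑ i, μ i * |x i - α| ≤ ∑ i, μ i * |x i - c|)
    (v : Fin n → ℝ) :
    (SubgradientAt (Nfun μ) x v ↔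
      (∀ i, α < x i → v i = μ i) ∧
      (∀ i, x i < α → v i = -μ i) ∧
      (∀ i, x i = α → |v i| ≤ μ i) ∧
      (∑ i, v i = 0)) ∧
    (SubgradientAt (Nfun μ) x v →
      ((∑ i ∈ Finset.univ.filter (fun i => x i < α), μ i)
          - (∑ i ∈ Finset.univ.filter (fun i => α < x i), μ i)
          - (∑ i ∈ Finset.univ.filter (fun i => x i = α), μ i)
        ≤ ∑ i ∈ Finset.univ.filter (fun i => x i = α), v i) ∧
      (∑ i ∈ Finset.univ.filter (fun i => x i = α), v i
        ≤ (∑ i ∈ Finset.univ.filter (fun i => x i < α), μ i)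
          - (∑ i ∈ Finset.univ.filter (fun i => α < x i), μ i)
          + (∑ i ∈ Finset.univ.filter (fun i => x i = α), μ i))) := by
  have hμ₀ (i : Fin n) : 0 ≤ μ i := (hμ i).le
  have hcoord (i : Fin n) := abs_subgradient_iff (a := x i - α) (w := v i) (hμ₀ i)
  simp only [sub_pos, sub_neg, sub_eq_zero] at hcoord
  have hiff : SubgradientAt (Nfun μ) x v ↔
      (∀ i, α < x i → v i = μ i) ∧ (∀ i, x i < α → v i = -μ i) ∧
      (∀ i, x i = α → |v i| ≤ μ i) ∧ ∑ i, v i = 0 := by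
    constructor
    · intro hv
      have h i := (hcoord i).mp (Nfun.abs_subgradient_of_subgradientAt hμ₀ hα hv i)
      exact ⟨fun i => (h i).1, fun i => (h i).2.1, fun i => (h i).2.2,
        Nfun.sum_eq_zero_of_subgradientAt hμ₀ hv⟩
    · rintro ⟨hgt, hlt, heq, hsum⟩
      exact Nfun.subgradientAt_of_abs_subgradient hμ₀ hα
        (fun i => (hcoord i).mpr ⟨hgt i, hlt i, heq i⟩) hsum
  refine ⟨hiff, fun hv => ?_⟩
  obtain ⟨hgt, hlt, -, hsum⟩ := hiff.mp hv
  have hB : 0 ≤ ∑ i ∈ univ.filter (fun i => x i = α), μ i := sum_nonneg fun i _ => hμ₀ i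
  rw [sum_filter_eq_sub_of_sum_eq_zero hgt hlt hsum]
  constructor <;> linarith

theorem stmt14 {n : ℕ} [NeZero n] (μ : Fin n → ℝ) (hμ : ∀ i, 0 < μ i)
    (x : Fin n → ℝ) (α : ℝ)
    (hα : ∀ c : ℝ, ∑ i, μ i * |x i - α| ≤ ∑ i, μ i * |x i - c|)
    (v : Fin n → ℝ) :
    (SubgradientAt (Nfun μ) x v ↔
      (∀ i, α < x i → v i = μ i) ∧
      (∀ i, x i < α → v i = -μ i) ∧
      (∀ i, x i = α → |v i| ≤ μ i) ∧
      (∑ i, v i = 0)) ∧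
    (SubgradientAt (Nfun μ) x v →
      ((∑ i ∈ Finset.univ.filter (fun i => x i < α), μ i)
          - (∑ i ∈ Finset.univ.filter (fun i => α < x i), μ i)
          - (∑ i ∈ Finset.univ.filter (fun i => x i = α), μ i)
        ≤ ∑ i ∈ Finset.univ.filter (fun i => x i = α), v i) ∧
      (∑ i ∈ Finset.univ.filter (fun i => x i = α), v i
        ≤ (∑ i ∈ Finset.univ.filter (fun i => x i < α), μ i)
          - (∑ i ∈ Finset.univ.filter (fun i => α < x i), μ i)
          + (∑ i ∈ Finset.univ.filter (fun i => x i = α), μ i))) :=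
  stmt14_general μ hμ x α hα v
end
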